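/- Let (A,B) ∈ ℂ^{n×n} be a proper Hessenberg pair with finite poles ξ_1,…,ξ_{n−1}, none of which is an eigenvalue of the pencil. Then the rational Krylov matrix K_k^rat(A, B, e_1, (ξ_1,…,ξ_{k−1}), P_k) = [e_1, M(ϱ_1,ξ_1)e_1, …, ∏_{i=1}^{k−1} M(ϱ_i,ξ_i)e_1] is upper triangular with nonzero diagonal entries, for any choice of shifts ϱ_i different from all the poles and eigenvalues. -/

import Mathlib

open Matrix

/-- A matrix is upper Hessenberg if all entries below the first subdiagonal vanish. -/
def UpperHessenberg {n : ℕ} (A : Matrix (Fin n) (Fin n) ℂ) : Prop :=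
  ∀ i j : Fin n, (j : ℕ) + 1 < (i : ℕ) → A i j = 0

/-- A proper Hessenberg pair: both matrices upper Hessenberg, no subdiagonal position with
both entries zero, linearly independent first columns and linearly independent last rows. -/
def ProperHessPair {n : ℕ} (A B : Matrix (Fin (n + 1)) (Fin (n + 1)) ℂ) : Prop :=
  UpperHessenberg A ∧ UpperHessenberg B ∧
    (∀ i j : Fin (n + 1), (i : ℕ) = (j : ℕ) + 1 → ¬(A i j = 0 ∧ B i j = 0)) ∧
    LinearIndependent ℂ ![fun i => A i 0, fun i => B i 0] ∧
    LinearIndependent ℂ ![fun j => A (Fin.last n) j, fun j => B (Fin.last n) j]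

/-- The elementary rational function M(ϱ,ξ) = (A − ϱB)(A − ξB)⁻¹. -/
noncomputable def Mfun {n : ℕ} (A B : Matrix (Fin n) (Fin n) ℂ) (ϱ ξ : ℂ) :
    Matrix (Fin n) (Fin n) ℂ :=
  (A - ϱ • B) * (A - ξ • B)⁻¹

/-- The ordered product ∏_{i=1}^{j} M(ϱᵢ, ξᵢ) of elementary rational functions. -/
noncomputable def prodM {n : ℕ} (A B : Matrix (Fin n) (Fin n) ℂ) (ϱ ξ : ℕ → ℂ)
    (j : ℕ) : Matrix (Fin n) (Fin n) ℂ :=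
  ((List.range j).map fun i => Mfun A B (ϱ i) (ξ i)).prod

/-! Write `v_t = ∏_{i<t} M(ϱ_i, ξ_i) e₁`. The factors `M(ϱ, ξ) = 1 + (ξ - ϱ) B (A - ξB)⁻¹` commute
by the resolvent identity, so `v_{j+1} = (A - ϱ_j B) w_j` with `w_j = (A - ξ_j B)⁻¹ v_j`. The
Hessenberg matrix `A - ξ_j B` has a zero `(j+1, j)` entry, hence maps `E_{j+1}` onto itself; thus
`w_j ∈ E_{j+1}`, and the `(j+1)`-st entry of `v_{j+1}` is `(ξ_j - ϱ_j) b_{j+1,j}` times the `j`-th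
entry of `w_j`. If that entry vanished, `v_j` would lie in `(A - ξ_j B) E_j`; the relations
`(ξ_t - ϱ_t) (A - ξ_j B) w_t = (ξ_j - ϱ_t) v_t + (ξ_t - ξ_j) v_{t+1}` would push `v_{j-1}, …, v_0`
into it as well, and these span `E_{j+1} = (A - ξ_j B) E_{j+1}`, forcing `E_{j+1} ≤ E_j`. -/

/-- `E_m = span {e₁, …, e_m}`; the indices of `Fin N` start at `0`, so `e₁` is `Pi.single 0 1`. -/
def stdFlag (K : Type*) [Field K] (N m : ℕ) : Submodule K (Fin N → K) where
  carrier := {x | ∀ i : Fin N, m ≤ (i : ℕ) → x i = 0}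
  add_mem' hx hy i hi := by simp [hx i hi, hy i hi]
  zero_mem' _ _ := rfl
  smul_mem' c x hx i hi := by simp [hx i hi]

section StdFlag

variable {K : Type*} [Field K] {N : ℕ}

theorem stdFlag_zero : stdFlag K N 0 = ⊥ :=
  eq_bot_iff.2 fun _ hx => funext fun i => hx i i.val.zero_le

theorem stdFlag_mono {m m' : ℕ} (h : m ≤ m') : stdFlag K N m ≤ stdFlag K N m' :=
  fun _ hx i hi => hx i (h.trans hi)

theorem mem_stdFlag_iff_apply_eq_zero {i : Fin N} {x : Fin N → K}
    (hx : x ∈ stdFlag K N (i + 1)) : x ∈ stdFlag K N i ↔ x i = 0 := by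
  refine ⟨fun h => h i le_rfl, fun h k hk => ?_⟩
  rcases hk.eq_or_lt with hki | hki
  · rwa [Fin.ext hki.symm]
  · exact hx k hki

theorem stdFlag_succ_not_le {m : ℕ} (hm : m < N) : ¬ stdFlag K N (m + 1) ≤ stdFlag K N m := by
  intro hle
  have hsingle : Pi.single (⟨m, hm⟩ : Fin N) (1 : K) ∈ stdFlag K N (m + 1) := fun i hi =>
    Pi.single_eq_of_ne (fun h => by simp [h] at hi) 1
  simpa using hle hsingle ⟨m, hm⟩ le_rfl

theorem stdFlag_succ_le_sup_span {m : ℕ} {x : Fin N → K} (hx : x ∈ stdFlag K N (m + 1))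
    (hx' : x ∉ stdFlag K N m) : stdFlag K N (m + 1) ≤ stdFlag K N m ⊔ K ∙ x := by
  obtain ⟨i, rfl, hxi⟩ : ∃ i : Fin N, (i : ℕ) = m ∧ x i ≠ 0 := by
    by_contra! h
    exact hx' fun k hk => hk.eq_or_lt.elim (fun hkm => h k hkm.symm) (hx k)
  intro y hy
  have hy' : y - (y i / x i) • x ∈ stdFlag K N i :=
    (mem_stdFlag_iff_apply_eq_zero (sub_mem hy (Submodule.smul_mem _ _ hx))).2 (by
      simp [div_mul_cancel₀ _ hxi])
  exact Submodule.mem_sup.2 ⟨_, hy', _,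
    Submodule.smul_mem _ _ (Submodule.mem_span_singleton_self x), sub_add_cancel _ _⟩

theorem stdFlag_succ_le_of_triangular {P : Submodule K (Fin N → K)} {x : ℕ → Fin N → K}
    {j : ℕ} (hx : ∀ t ≤ j, x t ∈ stdFlag K N (t + 1) ∧ x t ∉ stdFlag K N t)
    (hP : ∀ t ≤ j, x t ∈ P) : stdFlag K N (j + 1) ≤ P := by
  suffices ∀ t ≤ j + 1, stdFlag K N t ≤ P from this _ le_rfl
  intro t
  induction t with
  | zero => simp [stdFlag_zero]
  | succ t ih =>
    intro ht
    have htj : t ≤ j := by omega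
    exact (stdFlag_succ_le_sup_span (hx t htj).1 (hx t htj).2).trans
      (sup_le (ih (by omega)) ((Submodule.span_singleton_le_iff_mem _ _).2 (hP t htj)))

end StdFlag

theorem Matrix.map_mulVecLin_eq_of_map_le {K m : Type*} [Field K] [Fintype m] [DecidableEq m]
    {M : Matrix m m K} (hM : IsUnit M) {p : Submodule K (m → K)}
    (h : p.map M.mulVecLin ≤ p) : p.map M.mulVecLin = p :=
  Submodule.eq_of_le_of_finrank_eq h
    (Submodule.equivMapOfInjective _ (mulVec_injective_iff_isUnit.2 hM) p).finrank_eq.symm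

theorem Matrix.inv_mulVec_mem_of_map_le {K m : Type*} [Field K] [Fintype m] [DecidableEq m]
    {M : Matrix m m K} (hM : IsUnit M) {p : Submodule K (m → K)}
    (h : p.map M.mulVecLin ≤ p) {v : m → K} (hv : v ∈ p) : M⁻¹ *ᵥ v ∈ p := by
  rw [← map_mulVecLin_eq_of_map_le hM h] at hv
  obtain ⟨u, hu, rfl⟩ := hv
  rwa [mulVecLin_apply, mulVec_mulVec, nonsing_inv_mul _ ((isUnit_iff_isUnit_det M).1 hM),
    one_mulVec]

theorem Matrix.pencil_smul_mulVec {R m : Type*} [CommRing R] [Fintype m]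
    (A B : Matrix m m R) (x r s : R) (w : m → R) :
    (x - r) • ((A - s • B) *ᵥ w) = (s - r) • ((A - x • B) *ᵥ w) + (x - s) • ((A - r • B) *ᵥ w) := by
  simp only [sub_mulVec, smul_mulVec]
  module

section Pencil

variable {K m : Type*} [Field K] [Fintype m] [DecidableEq m] (A B : Matrix m m K)

theorem Matrix.pencil_resolvent_identity {x y : K} (hx : IsUnit (A - x • B))
    (hy : IsUnit (A - y • B)) :
    (x - y) • (B * (A - x • B)⁻¹ * (B * (A - y • B)⁻¹)) =
      B * (A - x • B)⁻¹ - B * (A - y • B)⁻¹ := by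
  have hB : (x - y) • B = (A - y • B) - (A - x • B) := by module
  calc (x - y) • (B * (A - x • B)⁻¹ * (B * (A - y • B)⁻¹))
      = B * (A - x • B)⁻¹ * ((x - y) • B) * (A - y • B)⁻¹ := by
        simp only [Matrix.mul_assoc, Matrix.mul_smul, Matrix.smul_mul]
    _ = B * (A - x • B)⁻¹ - B * (A - y • B)⁻¹ := by
        rw [hB, Matrix.mul_sub, Matrix.sub_mul,
          mul_nonsing_inv_cancel_right _ _ ((isUnit_iff_isUnit_det _).1 hy),
          nonsing_inv_mul_cancel_right _ _ ((isUnit_iff_isUnit_det _).1 hx)]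

theorem Matrix.commute_mul_pencil_inv {x y : K} (hx : IsUnit (A - x • B))
    (hy : IsUnit (A - y • B)) : Commute (B * (A - x • B)⁻¹) (B * (A - y • B)⁻¹) := by
  rcases eq_or_ne x y with rfl | hxy
  · exact Commute.refl _
  refine smul_right_injective _ (sub_ne_zero.2 hxy) ?_
  change (x - y) • _ = (x - y) • _
  rw [pencil_resolvent_identity A B hx hy, ← neg_sub y x, neg_smul,
    pencil_resolvent_identity A B hy hx, neg_sub]

end Pencil

section ElementaryRational

variable {n : ℕ} {A B : Matrix (Fin n) (Fin n) ℂ}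

theorem Mfun_eq_one_add {ϱ ξ : ℂ} (hξ : IsUnit (A - ξ • B)) :
    Mfun A B ϱ ξ = 1 + (ξ - ϱ) • (B * (A - ξ • B)⁻¹) := by
  have hpencil : A - ϱ • B = (A - ξ • B) + (ξ - ϱ) • B := by module
  rw [Mfun, hpencil, Matrix.add_mul, mul_nonsing_inv _ ((isUnit_iff_isUnit_det _).1 hξ),
    Matrix.smul_mul]

theorem Mfun_commute {ϱ₁ ξ₁ ϱ₂ ξ₂ : ℂ} (h₁ : IsUnit (A - ξ₁ • B)) (h₂ : IsUnit (A - ξ₂ • B)) :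
    Commute (Mfun A B ϱ₁ ξ₁) (Mfun A B ϱ₂ ξ₂) := by
  rw [Mfun_eq_one_add h₁, Mfun_eq_one_add h₂]
  exact (Commute.one_left _).add_left <| (Commute.one_right _).add_right <|
    ((commute_mul_pencil_inv A B h₁ h₂).smul_left _).smul_right _

theorem prodM_zero (ϱ ξ : ℕ → ℂ) : prodM A B ϱ ξ 0 = 1 := rfl

theorem prodM_succ (ϱ ξ : ℕ → ℂ) (t : ℕ) :
    prodM A B ϱ ξ (t + 1) = prodM A B ϱ ξ t * Mfun A B (ϱ t) (ξ t) := by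
  simp [prodM, List.range_succ]

theorem prodM_succ' {ϱ ξ : ℕ → ℂ} {t : ℕ} (hξ : ∀ i ≤ t, IsUnit (A - ξ i • B)) :
    prodM A B ϱ ξ (t + 1) = Mfun A B (ϱ t) (ξ t) * prodM A B ϱ ξ t := by
  refine (prodM_succ ϱ ξ t).trans (Commute.list_prod_right _ _ fun M hM => ?_).eq.symm
  obtain ⟨i, hi, rfl⟩ := List.mem_map.1 hM
  exact Mfun_commute (hξ t le_rfl) (hξ i (List.mem_range.1 hi).le)

end ElementaryRational

namespace UpperHessenberg

variable {N : ℕ} {H : Matrix (Fin N) (Fin N) ℂ}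

protected theorem sub_smul {A B : Matrix (Fin N) (Fin N) ℂ} (hA : UpperHessenberg A)
    (hB : UpperHessenberg B) (c : ℂ) : UpperHessenberg (A - c • B) := fun i j hij => by
  simp [hA i j hij, hB i j hij]

theorem mulVec_mem_stdFlag_succ (hH : UpperHessenberg H) {m : ℕ} {x : Fin N → ℂ}
    (hx : x ∈ stdFlag ℂ N m) : H *ᵥ x ∈ stdFlag ℂ N (m + 1) := by
  intro i hi
  change ∑ c, H i c * x c = 0
  refine Finset.sum_eq_zero fun c _ => ?_
  by_cases hc : m ≤ (c : ℕ)
  · simp [hx c hc]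
  · simp [hH i c (by omega)]

variable {n : ℕ} {H : Matrix (Fin (n + 1)) (Fin (n + 1)) ℂ}

theorem mulVec_apply_succ (hH : UpperHessenberg H) {i : Fin n} {x : Fin (n + 1) → ℂ}
    (hx : x ∈ stdFlag ℂ (n + 1) (i + 1)) :
    (H *ᵥ x) i.succ = H i.succ i.castSucc * x i.castSucc := by
  refine Finset.sum_eq_single i.castSucc (fun c _ hc => ?_) (absurd (Finset.mem_univ _))
  rcases lt_or_gt_of_ne (Fin.val_ne_of_ne hc) with hlt | hgt
  · simp [hH i.succ c (by simpa using hlt)]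
  · simp [hx c (by simpa using hgt)]

theorem map_stdFlag_le_of_subdiag_eq_zero (hH : UpperHessenberg H) {i : Fin n}
    (h0 : H i.succ i.castSucc = 0) :
    (stdFlag ℂ (n + 1) (i + 1)).map H.mulVecLin ≤ stdFlag ℂ (n + 1) (i + 1) := by
  rintro _ ⟨x, hx, rfl⟩
  exact (mem_stdFlag_iff_apply_eq_zero (i := i.succ) (hH.mulVec_mem_stdFlag_succ hx)).2
    (by rw [hH.mulVec_apply_succ hx, h0, zero_mul])

theorem mulVec_not_mem_stdFlag (hH : UpperHessenberg H) {i : Fin n}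
    (hne : H i.succ i.castSucc ≠ 0) {x : Fin (n + 1) → ℂ} (hx : x ∈ stdFlag ℂ (n + 1) (i + 1))
    (hx' : x ∉ stdFlag ℂ (n + 1) i) : H *ᵥ x ∉ stdFlag ℂ (n + 1) (i + 1) := by
  intro hHx
  have hzero : (H *ᵥ x) i.succ = 0 :=
    (mem_stdFlag_iff_apply_eq_zero (i := i.succ) (hH.mulVec_mem_stdFlag_succ hx)).1 hHx
  rw [hH.mulVec_apply_succ hx] at hzero
  exact mul_ne_zero hne (fun h => hx' ((mem_stdFlag_iff_apply_eq_zero (i := i.castSucc) hx).2 h))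
    hzero

end UpperHessenberg

theorem Matrix.sub_smul_apply_succ_castSucc {n : ℕ} {A B : Matrix (Fin (n + 1)) (Fin (n + 1)) ℂ}
    {i : Fin n} {ξ : ℂ} (hpole : A i.succ i.castSucc = ξ * B i.succ i.castSucc) (c : ℂ) :
    (A - c • B) i.succ i.castSucc = (ξ - c) * B i.succ i.castSucc := by
  rw [sub_apply, smul_apply, hpole, smul_eq_mul, sub_mul]

noncomputable def krylovVec {n : ℕ} (A B : Matrix (Fin (n + 1)) (Fin (n + 1)) ℂ) (ϱ ξ : ℕ → ℂ)
    (t : ℕ) : Fin (n + 1) → ℂ :=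
  prodM A B ϱ ξ t *ᵥ Pi.single 0 1

section RationalKrylov

variable {n : ℕ} {A B : Matrix (Fin (n + 1)) (Fin (n + 1)) ℂ} {ϱ ξ : ℕ → ℂ}

theorem krylovVec_zero : krylovVec A B ϱ ξ 0 = Pi.single 0 1 := by
  rw [krylovVec, prodM_zero, one_mulVec]

theorem krylovVec_succ {t : ℕ} (hξ : ∀ i ≤ t, IsUnit (A - ξ i • B)) :
    krylovVec A B ϱ ξ (t + 1) = (A - ϱ t • B) *ᵥ ((A - ξ t • B)⁻¹ *ᵥ krylovVec A B ϱ ξ t) := by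
  simp only [krylovVec, prodM_succ' hξ, Mfun, mulVec_mulVec, Matrix.mul_assoc]

theorem pencil_mulVec_krylovVec {t : ℕ} (hξ : ∀ i ≤ t, IsUnit (A - ξ i • B)) (s : ℂ) :
    (ξ t - ϱ t) • ((A - s • B) *ᵥ ((A - ξ t • B)⁻¹ *ᵥ krylovVec A B ϱ ξ t)) =
      (s - ϱ t) • krylovVec A B ϱ ξ t + (ξ t - s) • krylovVec A B ϱ ξ (t + 1) := by
  rw [pencil_smul_mulVec, krylovVec_succ hξ, mulVec_mulVec,
    mul_nonsing_inv _ ((isUnit_iff_isUnit_det _).1 (hξ t le_rfl)), one_mulVec]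

theorem map_stdFlag_le_of_pole (hA : UpperHessenberg A) (hB : UpperHessenberg B)
    (hpoles : ∀ i : Fin n, B i.succ i.castSucc ≠ 0 ∧
      A i.succ i.castSucc = ξ (i : ℕ) * B i.succ i.castSucc) {t : ℕ} (ht : t < n) :
    (stdFlag ℂ (n + 1) (t + 1)).map (A - ξ t • B).mulVecLin ≤ stdFlag ℂ (n + 1) (t + 1) :=
  (hA.sub_smul hB _).map_stdFlag_le_of_subdiag_eq_zero (i := ⟨t, ht⟩) <| by
    rw [sub_smul_apply_succ_castSucc (hpoles ⟨t, ht⟩).2, sub_self, zero_mul]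

theorem krylovVec_mem_stdFlag (hA : UpperHessenberg A) (hB : UpperHessenberg B)
    (hpoles : ∀ i : Fin n, B i.succ i.castSucc ≠ 0 ∧
      A i.succ i.castSucc = ξ (i : ℕ) * B i.succ i.castSucc)
    (heig : ∀ i, i < n → IsUnit (A - ξ i • B)) :
    ∀ t ≤ n, krylovVec A B ϱ ξ t ∈ stdFlag ℂ (n + 1) (t + 1) := by
  intro t
  induction t with
  | zero =>
    intro _ i hi
    rw [krylovVec_zero, Pi.single_eq_of_ne (Fin.pos_iff_ne_zero.1 hi)]
  | succ t ih =>
    intro ht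
    rw [krylovVec_succ fun i hi => heig i (by omega)]
    exact (hA.sub_smul hB _).mulVec_mem_stdFlag_succ <|
      inv_mulVec_mem_of_map_le (heig t ht) (map_stdFlag_le_of_pole hA hB hpoles ht) (ih (by omega))

theorem krylovVec_not_mem_map_stdFlag (hA : UpperHessenberg A) (hB : UpperHessenberg B)
    (hpoles : ∀ i : Fin n, B i.succ i.castSucc ≠ 0 ∧
      A i.succ i.castSucc = ξ (i : ℕ) * B i.succ i.castSucc)
    (heig : ∀ i, i < n → IsUnit (A - ξ i • B)) (hshift : ∀ i j, i < n → j < n → ϱ i ≠ ξ j)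
    {j : ℕ} (hj : j < n) (hv : ∀ t ≤ j, krylovVec A B ϱ ξ t ∉ stdFlag ℂ (n + 1) t) :
    krylovVec A B ϱ ξ j ∉ (stdFlag ℂ (n + 1) j).map (A - ξ j • B).mulVecLin := by
  set F := (stdFlag ℂ (n + 1) j).map (A - ξ j • B).mulVecLin
  intro hvj
  have hback : ∀ t ≤ j, krylovVec A B ϱ ξ t ∈ F := by
    refine fun s hs => Nat.decreasingInduction (motive := fun t _ => krylovVec A B ϱ ξ t ∈ F)
      (fun t htj hnext => ?_) hvj hs
    have hw : (A - ξ j • B) *ᵥ ((A - ξ t • B)⁻¹ *ᵥ krylovVec A B ϱ ξ t) ∈ F :=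
      ⟨_, stdFlag_mono htj <| inv_mulVec_mem_of_map_le (heig t (by omega))
        (map_stdFlag_le_of_pole hA hB hpoles (by omega))
        (krylovVec_mem_stdFlag hA hB hpoles heig t (by omega)), rfl⟩
    have hrel := pencil_mulVec_krylovVec (ϱ := ϱ) (t := t) (fun i hi => heig i (by omega)) (ξ j)
    have hmem : (ξ j - ϱ t) • krylovVec A B ϱ ξ t ∈ F := by
      rw [eq_sub_of_add_eq hrel.symm]
      exact sub_mem (F.smul_mem _ hw) (F.smul_mem _ hnext)
    exact (F.smul_mem_iff (sub_ne_zero.2 (hshift t j (by omega) hj).symm)).1 hmem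
  have hflag : stdFlag ℂ (n + 1) (j + 1) ≤ F :=
    stdFlag_succ_le_of_triangular
      (fun t ht => ⟨krylovVec_mem_stdFlag hA hB hpoles heig t (by omega), hv t ht⟩) hback
  rw [← map_mulVecLin_eq_of_map_le (heig j hj) (map_stdFlag_le_of_pole hA hB hpoles hj),
    Submodule.map_le_map_iff_of_injective (mulVec_injective_iff_isUnit.2 (heig j hj))] at hflag
  exact stdFlag_succ_not_le (by omega) hflag

theorem krylovVec_not_mem_stdFlag (hA : UpperHessenberg A) (hB : UpperHessenberg B)
    (hpoles : ∀ i : Fin n, B i.succ i.castSucc ≠ 0 ∧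
      A i.succ i.castSucc = ξ (i : ℕ) * B i.succ i.castSucc)
    (heig : ∀ i, i < n → IsUnit (A - ξ i • B)) (hshift : ∀ i j, i < n → j < n → ϱ i ≠ ξ j) :
    ∀ j ≤ n, krylovVec A B ϱ ξ j ∉ stdFlag ℂ (n + 1) j := by
  intro j
  induction j using Nat.strong_induction_on with
  | _ j ih =>
    cases j with
    | zero =>
      intro _
      simp [krylovVec_zero, stdFlag_zero]
    | succ j =>
      intro hj
      have hjn : j < n := by omega
      set w := (A - ξ j • B)⁻¹ *ᵥ krylovVec A B ϱ ξ j
      have hw : w ∈ stdFlag ℂ (n + 1) (j + 1) :=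
        inv_mulVec_mem_of_map_le (heig j hjn) (map_stdFlag_le_of_pole hA hB hpoles hjn)
          (krylovVec_mem_stdFlag hA hB hpoles heig j hjn.le)
      have hw' : w ∉ stdFlag ℂ (n + 1) j := fun h =>
        krylovVec_not_mem_map_stdFlag hA hB hpoles heig hshift hjn
          (fun t ht => ih t (by omega) (by omega)) ⟨w, h, by
            rw [mulVecLin_apply, mulVec_mulVec,
              mul_nonsing_inv _ ((isUnit_iff_isUnit_det _).1 (heig j hjn)), one_mulVec]⟩
      have hsubdiag : (A - ϱ j • B) (⟨j, hjn⟩ : Fin n).succ (⟨j, hjn⟩ : Fin n).castSucc ≠ 0 := by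
        rw [sub_smul_apply_succ_castSucc (hpoles ⟨j, hjn⟩).2]
        exact mul_ne_zero (sub_ne_zero.2 (hshift j j hjn hjn).symm) (hpoles ⟨j, hjn⟩).1
      rw [krylovVec_succ fun i hi => heig i (by omega)]
      exact (hA.sub_smul hB _).mulVec_not_mem_stdFlag hsubdiag hw hw'

end RationalKrylov

theorem rational_krylov_matrix_upper_triangular_general {n : ℕ}
    (A B : Matrix (Fin (n + 1)) (Fin (n + 1)) ℂ)
    (h : ProperHessPair A B)
    (ξ : ℕ → ℂ)
    (hpoles : ∀ i : Fin n, B i.succ i.castSucc ≠ 0 ∧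
      A i.succ i.castSucc = ξ (i : ℕ) * B i.succ i.castSucc)
    (heig : ∀ i, i < n → IsUnit (A - ξ i • B))
    (ϱ : ℕ → ℂ)
    (hshift : ∀ i j, i < n → j < n → ϱ i ≠ ξ j)
    (k : ℕ) (hk : k ≤ n + 1) :
    ∀ j : Fin k,
      (∀ i : Fin (n + 1), (j : ℕ) < (i : ℕ) →
        (prodM A B ϱ ξ (j : ℕ)).mulVec (Pi.single 0 1) i = 0) ∧
      (prodM A B ϱ ξ (j : ℕ)).mulVec (Pi.single 0 1) (Fin.castLE hk j) ≠ 0 := by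
  intro j
  have hj : (j : ℕ) ≤ n := by omega
  have hmem := krylovVec_mem_stdFlag h.1 h.2.1 hpoles heig (ϱ := ϱ) j hj
  have hnot := krylovVec_not_mem_stdFlag h.1 h.2.1 hpoles heig hshift j hj
  exact ⟨hmem, (mem_stdFlag_iff_apply_eq_zero (i := Fin.castLE hk j) hmem).not.1 hnot⟩

/-- For a proper Hessenberg pair with finite poles, none of which is an eigenvalue, the
rational Krylov matrix [e₁, M(ϱ₁,ξ₁)e₁, …, ∏ M(ϱᵢ,ξᵢ)e₁] is upper triangular with nonzero
diagonal entries, for any shifts different from all poles and eigenvalues. -/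
theorem rational_krylov_matrix_upper_triangular {n : ℕ}
    (A B : Matrix (Fin (n + 1)) (Fin (n + 1)) ℂ)
    (h : ProperHessPair A B)
    (ξ : ℕ → ℂ)
    (hpoles : ∀ i : Fin n, B i.succ i.castSucc ≠ 0 ∧
      A i.succ i.castSucc = ξ (i : ℕ) * B i.succ i.castSucc)
    (heig : ∀ i, i < n → IsUnit (A - ξ i • B))
    (ϱ : ℕ → ℂ)
    (hshift : ∀ i j, i < n → j < n → ϱ i ≠ ξ j)
    (hshifteig : ∀ i, i < n → IsUnit (A - ϱ i • B))
    (k : ℕ) (hk : k ≤ n + 1) :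
    ∀ j : Fin k,
      (∀ i : Fin (n + 1), (j : ℕ) < (i : ℕ) →
        (prodM A B ϱ ξ (j : ℕ)).mulVec (Pi.single 0 1) i = 0) ∧
      (prodM A B ϱ ξ (j : ℕ)).mulVec (Pi.single 0 1) (Fin.castLE hk j) ≠ 0 :=
  rational_krylov_matrix_upper_triangular_general A B h ξ hpoles heig ϱ hshift k hk
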